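/- Let G be a connected graph, r a positive integer, and f a real polynomial. If A^r = f(Q) or A^r = f(L), then G is regular or biregular. -/

import Mathlib

open Matrix Polynomial

/-!
Both `Q = D + A` and `L = D - A` commute with any polynomial in themselves, and `A` commutes
with `A ^ r`; hence `D` commutes with `A ^ r`. Comparing the `(u, v)` entries of
`D * A ^ r = A ^ r * D` gives `deg u = deg v` whenever `(A ^ r) u v`, the number of walks of length
`r` from `u` to `v`, is nonzero. In a connected graph with at least one edge every walk can be
lengthened by steps back and forth, so a walk of length 2 becomes one of length `2 r`, which splits
into two walks of length `r`. Thus the degree is constant along walks of even length: a vertex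
reached from a fixed vertex `v₀` by a walk of even length has the degree of `v₀`, one reached by a
walk of odd length that of a neighbour `v₁` of `v₀`. Extending a walk by an edge flips its parity,
so either these two degrees agree or adjacent vertices always carry different ones.
-/

theorem Polynomial.commute_aeval_self {R A : Type*} [CommSemiring R] [Semiring A] [Algebra R A]
    (x : A) (f : R[X]) : Commute x (aeval x f) := by
  simpa using (commute_X f).map (aeval x)

theorem Matrix.apply_eq_of_commute_diagonal {n R : Type*} [Fintype n] [DecidableEq n]
    [CommRing R] [NoZeroDivisors R] {d : n → R} {M : Matrix n n R}
    (h : Commute (diagonal d) M) {i j : n} (hij : M i j ≠ 0) : d i = d j := by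
  have := congrFun (congrFun h.eq i) j
  rw [diagonal_mul, mul_diagonal, mul_comm] at this
  exact mul_left_cancel₀ hij this

namespace SimpleGraph

variable {V : Type*} {G : SimpleGraph V}

theorem adjMatrix_pow_apply_ne_zero [Fintype V] [DecidableEq V] [DecidableRel G.Adj]
    {R : Type*} [Semiring R] [CharZero R] {u v : V} (p : G.Walk u v) :
    (G.adjMatrix R ^ p.length) u v ≠ 0 := by
  rw [adjMatrix_pow_apply_eq_card_walk, Nat.cast_ne_zero]
  exact (Fintype.card_pos_iff.mpr ⟨⟨p, rfl⟩⟩).ne'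

theorem Walk.exists_length_eq_add_two_mul (hadj : ∀ v, ∃ w, G.Adj v w) {u v : V}
    (p : G.Walk u v) (k : ℕ) : ∃ q : G.Walk u v, q.length = p.length + 2 * k := by
  induction k with
  | zero => exact ⟨p, rfl⟩
  | succ k ih =>
    obtain ⟨q, hq⟩ := ih
    obtain ⟨w, hw⟩ := hadj u
    exact ⟨.cons hw (.cons hw.symm q), by simp [hq]; ring⟩

variable {α : Type*} {φ : V → α}

theorem eq_of_walk_length_two_mul {r : ℕ}
    (hφ : ∀ u v (p : G.Walk u v), p.length = r → φ u = φ v) {u v : V} (p : G.Walk u v)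
    (hp : p.length = 2 * r) : φ u = φ v :=
  (hφ _ _ (p.take r) (by rw [Walk.take_length, hp]; omega)).trans
    (hφ _ _ (p.drop r) (by rw [Walk.drop_length, hp]; omega))

theorem eq_of_walk_length_two {r : ℕ} (hr : 0 < r) (hadj : ∀ v, ∃ w, G.Adj v w)
    (hφ : ∀ u v (p : G.Walk u v), p.length = r → φ u = φ v) {u v : V} (p : G.Walk u v)
    (hp : p.length = 2) : φ u = φ v := by
  obtain ⟨q, hq⟩ := p.exists_length_eq_add_two_mul hadj (r - 1)
  exact eq_of_walk_length_two_mul hφ q (by omega)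

theorem eq_of_walk_length_even
    (hφ : ∀ u v (p : G.Walk u v), p.length = 2 → φ u = φ v) :
    ∀ {u v : V} (p : G.Walk u v), Even p.length → φ u = φ v
  | _, _, .nil, _ => rfl
  | _, _, .cons _ .nil, he => by simp at he
  | _, _, .cons h (.cons h' q), he =>
    (hφ _ _ (.cons h (.cons h' .nil)) rfl).trans
      (eq_of_walk_length_even hφ q (by simpa [Nat.even_add_one, parity_simps] using he))

theorem eq_ite_even_of_walk {v₀ v₁ : V} (hv : G.Adj v₀ v₁)
    (hφ : ∀ {u v : V} (p : G.Walk u v), Even p.length → φ u = φ v) {x : V} (p : G.Walk v₀ x) :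
    φ x = if Even p.length then φ v₀ else φ v₁ := by
  split_ifs with he
  · exact (hφ p he).symm
  · exact (hφ (.cons hv.symm p) (by simpa [Nat.even_add_one] using he)).symm

variable [Fintype V] [DecidableRel G.Adj]

theorem degree_eq_of_commute_diagonal_adjMatrix_pow [DecidableEq V] {R : Type*} [CommRing R]
    [NoZeroDivisors R] [CharZero R] {r : ℕ}
    (h : Commute (diagonal fun v => (G.degree v : R)) (G.adjMatrix R ^ r)) {u v : V}
    (p : G.Walk u v) (hp : p.length = r) : G.degree u = G.degree v := by
  subst hp
  exact_mod_cast apply_eq_of_commute_diagonal h (adjMatrix_pow_apply_ne_zero p)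

theorem regular_or_biregular_of_degree_eq_of_walk_length (hconn : G.Connected) {r : ℕ}
    (hr : 0 < r) (hdeg : ∀ u v (p : G.Walk u v), p.length = r → G.degree u = G.degree v) :
    (∃ d : ℕ, G.IsRegularOfDegree d) ∨
    (∃ (W : Set V) (d₁ d₂ : ℕ),
      (∀ u v : V, G.Adj u v → (u ∈ W ↔ v ∉ W)) ∧
      (∀ v ∈ W, G.degree v = d₁) ∧ (∀ v ∉ W, G.degree v = d₂)) := by
  cases subsingleton_or_nontrivial V
  · exact .inl ⟨0, fun v => G.degree_eq_zero_of_subsingleton v⟩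
  have hadj := hconn.preconnected.exists_adj_of_nontrivial
  obtain ⟨v₀⟩ := hconn.nonempty
  obtain ⟨v₁, hv⟩ := hadj v₀
  have hpar : ∀ {x} (p : G.Walk v₀ x),
      G.degree x = if Even p.length then G.degree v₀ else G.degree v₁ :=
    eq_ite_even_of_walk hv (eq_of_walk_length_even fun _ _ => eq_of_walk_length_two hr hadj hdeg)
  by_cases hd : G.degree v₀ = G.degree v₁
  · refine .inl ⟨G.degree v₀, fun x => ?_⟩
    obtain ⟨p⟩ := hconn v₀ x
    rw [hpar p, ← hd, ite_self]
  refine .inr ⟨{v | G.degree v = G.degree v₀}, G.degree v₀, G.degree v₁,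
    fun u v huv => ?_, fun _ => id, fun x hx => ?_⟩
  · obtain ⟨p⟩ := hconn v₀ u
    simp only [Set.mem_ofPred_eq, hpar p, hpar (p.concat huv), Walk.length_concat,
      Nat.even_add_one]
    split_ifs <;> simp [Ne.symm hd]
  · obtain ⟨p⟩ := hconn v₀ x
    have hx' := hpar p
    split_ifs at hx'
    exacts [absurd hx' hx, hx']

end SimpleGraph

/-- If `G` is connected and `A^r = f(Q)` or `A^r = f(L)` for some polynomial
`f` and positive integer `r`, then `G` is regular or biregular. -/
theorem regular_or_biregular_of_adj_pow_relation
    {V : Type*} [Fintype V] [DecidableEq V]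
    (G : SimpleGraph V) [DecidableRel G.Adj] (hconn : G.Connected)
    (r : ℕ) (hr : 0 < r) (f : Polynomial ℝ)
    (A D Q L : Matrix V V ℝ)
    (hA : A = G.adjMatrix ℝ)
    (hD : D = Matrix.diagonal fun v => (G.degree v : ℝ))
    (hQ : Q = D + A)
    (hL : L = D - A)
    (hrel : A ^ r = Polynomial.aeval Q f ∨ A ^ r = Polynomial.aeval L f) :
    (∃ d : ℕ, G.IsRegularOfDegree d) ∨
    (∃ (W : Set V) (d₁ d₂ : ℕ),
      (∀ u v : V, G.Adj u v → (u ∈ W ↔ v ∉ W)) ∧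
      (∀ v ∈ W, G.degree v = d₁) ∧ (∀ v ∉ W, G.degree v = d₂)) := by
  have hApow : Commute A (A ^ r) := (Commute.refl A).pow_right r
  have hcomm : Commute D (A ^ r) := by
    rcases hrel with h | h
    · rw [show D = Q - A by rw [hQ, add_sub_cancel_right], h]
      exact (commute_aeval_self Q f).sub_left (h ▸ hApow)
    · rw [show D = L + A by rw [hL, sub_add_cancel], h]
      exact (commute_aeval_self L f).add_left (h ▸ hApow)
  subst hA hD
  exact G.regular_or_biregular_of_degree_eq_of_walk_length hconn hr fun _ _ p hp =>
    SimpleGraph.degree_eq_of_commute_diagonal_adjMatrix_pow hcomm p hp
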